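/- arXiv:1512.02033 — 2 statements merged into one kernel-verified Lean document; each statement's English description precedes it below -/
import Mathlib

section
/- The orbit loss equals the expectation of a perturbed sign indicator: Let w ∈ EuclideanSpace ℝ (Fin d), y ∈ Y, and let ŷ be a maximizer for w with y ≠ ŷ and ψ y ≠ ψ ŷ. Then μ₁{z : z > ⟪w, δψ(y, ŷ)⟫} · ℓ(y, ŷ) = μ_d{ε : ⟪w + ε, δψ(y, ŷ)⟫ < 0} · ℓ(y, ŷ). -/
open MeasureTheory ProbabilityTheory
open scoped InnerProductSpace ENNReal

/-- The standard Gaussian measure on `EuclideanSpace ℝ (Fin d)`. -/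
noncomputable def stdGaussianE (d : ℕ) : Measure (EuclideanSpace ℝ (Fin d)) :=
  (Measure.pi fun _ : Fin d => gaussianReal 0 1).map
    (MeasurableEquiv.toLp 2 (Fin d → ℝ))

/-- The normalized feature difference `δψ(y, y')`. -/
noncomputable def deltaFeat {d : ℕ} {Y : Type*} [DecidableEq Y]
    (ψ : Y → EuclideanSpace ℝ (Fin d)) (y y' : Y) : EuclideanSpace ℝ (Fin d) :=
  if y = y' then 0 else ‖ψ y - ψ y'‖⁻¹ • (ψ y - ψ y')

/-! The law of `⟪ε, u⟫` under the standard Gaussian is `N(0, ‖u‖²)` by rotation invariance.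
For a unit vector `u` the event `⟪w + ε, u⟫ < 0` is `⟪ε, u⟫ < -⟪w, u⟫`, which by symmetry
of `N(0, 1)` has the probability of `z > ⟪w, u⟫`. -/

open scoped NNReal

theorem stdGaussianE_eq_stdGaussian (d : ℕ) :
    stdGaussianE d = stdGaussian (EuclideanSpace ℝ (Fin d)) :=
  map_pi_eq_stdGaussian

instance isNegInvariant_gaussianReal_zero (v : ℝ≥0) : (gaussianReal 0 v).IsNegInvariant :=
  ⟨by rw [Measure.neg_def, gaussianReal_map_neg, neg_zero]⟩

section StdGaussian

variable {E : Type*} [NormedAddCommGroup E] [InnerProductSpace ℝ E] [FiniteDimensional ℝ E]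
  [MeasurableSpace E] [BorelSpace E]

theorem stdGaussian_map_inner_right (u : E) :
    (stdGaussian E).map (fun x => ⟪x, u⟫_ℝ) = gaussianReal 0 (‖u‖₊ ^ 2) := by
  have h := IsGaussian.map_eq_gaussianReal (μ := stdGaussian E) (innerSL ℝ u)
  simp only [integral_strongDual_stdGaussian, variance_dual_stdGaussian, innerSL_apply_norm] at h
  convert h using 2
  · ext x
    exact real_inner_comm _ _
  · ext
    simp

theorem stdGaussian_inner_add_neg (w u : E) (hu : ‖u‖ = 1) :
    stdGaussian E {ε | ⟪w + ε, u⟫_ℝ < 0} = gaussianReal 0 1 (Set.Ioi ⟪w, u⟫_ℝ) := by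
  have hset : {ε : E | ⟪w + ε, u⟫_ℝ < 0} = (fun x => ⟪x, u⟫_ℝ) ⁻¹' Set.Iio (-⟪w, u⟫_ℝ) := by
    ext ε
    simp only [Set.mem_ofPred_eq, Set.mem_preimage, Set.mem_Iio, inner_add_left]
    constructor <;> intro h <;> linarith
  rw [hset, ← Measure.map_apply (by fun_prop) measurableSet_Iio, stdGaussian_map_inner_right,
    ← Set.neg_Ioi, Measure.measure_neg, show ‖u‖₊ = 1 from NNReal.eq hu, one_pow]

end StdGaussian

theorem norm_deltaFeat {d : ℕ} {Y : Type*} [DecidableEq Y]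
    (ψ : Y → EuclideanSpace ℝ (Fin d)) {y y' : Y} (hne : y ≠ y') (hψ : ψ y ≠ ψ y') :
    ‖deltaFeat ψ y y'‖ = 1 := by
  rw [deltaFeat, if_neg hne, norm_smul, norm_inv, norm_norm,
    inv_mul_cancel₀ (norm_ne_zero_iff.2 (sub_ne_zero.2 hψ))]

theorem stmt_7_general {d : ℕ} {Y : Type*} [DecidableEq Y]
    (ψ : Y → EuclideanSpace ℝ (Fin d))
    (ℓ : Y → Y → ℝ)
    (w : EuclideanSpace ℝ (Fin d)) (y yh : Y)
    (hne : y ≠ yh) (hψ : ψ y ≠ ψ yh) :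
    (gaussianReal 0 1 {z | z > ⟪w, deltaFeat ψ y yh⟫_ℝ}).toReal * ℓ y yh =
      (stdGaussianE d {ε | ⟪w + ε, deltaFeat ψ y yh⟫_ℝ < 0}).toReal * ℓ y yh := by
  rw [stdGaussianE_eq_stdGaussian, stdGaussian_inner_add_neg _ _ (norm_deltaFeat ψ hne hψ)]
  rfl

theorem stmt_7 {d : ℕ} (hd : 0 < d) {Y : Type*} [Fintype Y] [Nonempty Y] [DecidableEq Y]
    (ψ : Y → EuclideanSpace ℝ (Fin d))
    (ℓ : Y → Y → ℝ) (hℓ : ∀ y y', 0 ≤ ℓ y y' ∧ ℓ y y' ≤ 1)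
    (w : EuclideanSpace ℝ (Fin d)) (y yh : Y)
    (hmax : ∀ y' : Y, ⟪w, ψ yh⟫_ℝ ≥ ⟪w, ψ y'⟫_ℝ)
    (hne : y ≠ yh) (hψ : ψ y ≠ ψ yh) :
    (gaussianReal 0 1 {z | z > ⟪w, deltaFeat ψ y yh⟫_ℝ}).toReal * ℓ y yh =
      (stdGaussianE d {ε | ⟪w + ε, deltaFeat ψ y yh⟫_ℝ < 0}).toReal * ℓ y yh :=
  stmt_7_general ψ ℓ w y yh hne hψ
end

section
/- Margin condition forces large perturbations to change the prediction: Let ψ assign distinct feature vectors to distinct labels, let h be a maximizer selection, let w ∈ EuclideanSpace ℝ (Fin d), and let η > 0. Assume that for every y' ≠ h(w), ⟪w, δψ(h(w), y')⟫ ≥ η. Then for every ε ∈ EuclideanSpace ℝ (Fin d) with h(w + ε) ≠ h(w), one has ⟪ε, δψ(h(w + ε), h(w))⟫ ≥ η, and consequently ‖ε‖ ≥ η. -/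
open MeasureTheory ProbabilityTheory
open scoped InnerProductSpace ENNReal

/-! Maximality of `h (w + ε)` makes `⟪w + ε, δψ(h (w + ε), h w)⟫` nonnegative, while by antisymmetry
of `δψ` the margin says `⟪w, δψ(h (w + ε), h w)⟫ ≤ -η`; subtracting gives the bound on `ε`. -/

section DeltaFeat

variable {d : ℕ} {Y : Type*} [DecidableEq Y] (ψ : Y → EuclideanSpace ℝ (Fin d))

theorem deltaFeat_swap (y y' : Y) : deltaFeat ψ y' y = -deltaFeat ψ y y' := by
  unfold deltaFeat
  by_cases hyy : y = y'
  · simp [hyy]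
  · rw [if_neg (Ne.symm hyy), if_neg hyy, norm_sub_rev, ← smul_neg, neg_sub]

theorem norm_deltaFeat_le_one (y y' : Y) : ‖deltaFeat ψ y y'‖ ≤ 1 := by
  unfold deltaFeat
  split_ifs
  · simp
  · rw [norm_smul, norm_inv, norm_norm]
    by_cases h0 : ‖ψ y - ψ y'‖ = 0
    · simp [h0]
    · rw [inv_mul_cancel₀ h0]

theorem inner_deltaFeat_le_norm (ε : EuclideanSpace ℝ (Fin d)) (y y' : Y) :
    ⟪ε, deltaFeat ψ y y'⟫_ℝ ≤ ‖ε‖ :=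
  (real_inner_le_norm _ _).trans
    (mul_le_of_le_one_right (norm_nonneg ε) (norm_deltaFeat_le_one ψ y y'))

theorem inner_deltaFeat_nonneg_of_isMax {v : EuclideanSpace ℝ (Fin d)} {y : Y}
    (hy : ∀ y', ⟪v, ψ y'⟫_ℝ ≤ ⟪v, ψ y⟫_ℝ) (y' : Y) : 0 ≤ ⟪v, deltaFeat ψ y y'⟫_ℝ := by
  unfold deltaFeat
  split_ifs
  · simp
  · rw [real_inner_smul_right, inner_sub_right]
    exact mul_nonneg (by positivity) (sub_nonneg.mpr (hy y'))

theorem le_inner_deltaFeat_of_margin {w ε : EuclideanSpace ℝ (Fin d)} {y₀ y : Y} {η : ℝ}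
    (hy : ∀ y', ⟪w + ε, ψ y'⟫_ℝ ≤ ⟪w + ε, ψ y⟫_ℝ) (hmargin : η ≤ ⟪w, deltaFeat ψ y₀ y⟫_ℝ) :
    η ≤ ⟪ε, deltaFeat ψ y y₀⟫_ℝ := by
  have hmax := inner_deltaFeat_nonneg_of_isMax ψ hy y₀
  rw [deltaFeat_swap ψ y y₀, inner_neg_right] at hmargin
  rw [inner_add_left] at hmax
  linarith

end DeltaFeat

theorem stmt_10_general {d : ℕ} {Y : Type*} [DecidableEq Y]
    (ψ : Y → EuclideanSpace ℝ (Fin d))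
    (h : EuclideanSpace ℝ (Fin d) → Y)
    (hmax : ∀ (v : EuclideanSpace ℝ (Fin d)) (y' : Y), ⟪v, ψ (h v)⟫_ℝ ≥ ⟪v, ψ y'⟫_ℝ)
    (w : EuclideanSpace ℝ (Fin d)) (η : ℝ)
    (hmargin : ∀ y' : Y, y' ≠ h w → ⟪w, deltaFeat ψ (h w) y'⟫_ℝ ≥ η) :
    ∀ ε : EuclideanSpace ℝ (Fin d), h (w + ε) ≠ h w →
      ⟪ε, deltaFeat ψ (h (w + ε)) (h w)⟫_ℝ ≥ η ∧ ‖ε‖ ≥ η := by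
  intro ε hne
  have hε := le_inner_deltaFeat_of_margin ψ (hmax (w + ε)) (hmargin _ hne)
  exact ⟨hε, hε.trans (inner_deltaFeat_le_norm ψ ε _ _)⟩

theorem stmt_10 {d : ℕ} (hd : 0 < d) {Y : Type*} [Fintype Y] [Nonempty Y] [DecidableEq Y]
    (ψ : Y → EuclideanSpace ℝ (Fin d)) (hψ : Function.Injective ψ)
    (h : EuclideanSpace ℝ (Fin d) → Y)
    (hmax : ∀ (v : EuclideanSpace ℝ (Fin d)) (y' : Y), ⟪v, ψ (h v)⟫_ℝ ≥ ⟪v, ψ y'⟫_ℝ)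
    (w : EuclideanSpace ℝ (Fin d)) (η : ℝ) (hη : 0 < η)
    (hmargin : ∀ y' : Y, y' ≠ h w → ⟪w, deltaFeat ψ (h w) y'⟫_ℝ ≥ η) :
    ∀ ε : EuclideanSpace ℝ (Fin d), h (w + ε) ≠ h w →
      ⟪ε, deltaFeat ψ (h (w + ε)) (h w)⟫_ℝ ≥ η ∧ ‖ε‖ ≥ η :=
  stmt_10_general ψ h hmax w η hmargin
end
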